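/- The integral is a trace for the Moyal product: for all f, g ∈ 𝒮(ℝ^D, ℂ), the function x ↦ (f ⋆ g)(x) is integrable on ℝ^D and ∫_{ℝ^D} (f ⋆ g)(x) dx = ∫_{ℝ^D} f(x) g(x) dx. -/

import Mathlib

/-!
Written with the Fourier character `𝐞`, the phase is `e^{-i y∧z} = 𝐞 ⟪y, A z⟫` with
`A = (πθ)⁻¹ Σ`. The triple integral `∫∫∫ f(x+y) g(x+z) 𝐞 ⟪y, A z⟫` is not absolutely convergent,
so Fubini cannot be applied to it directly; one first integrates out `y`, which gives
`(f ⋆ g)(x) = (πθ)^{-D} ∫ g(x+z) 𝐞(-⟪x, A z⟫) 𝓕⁻f(A z) dz`, an absolutely integrable function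
of `(x, z)`. Integrating now in `x` produces `𝓕 g (A z) 𝓕⁻ f (A z)`, the remaining character
`𝐞 ⟪z, A z⟫` being trivial because `Σ` is skew. As `Σ` is orthogonal the substitution
`ξ = A z` has Jacobian `(πθ)^D`, and Parseval's identity `∫ 𝓕 g · 𝓕⁻ f = ∫ f g` concludes.
-/

open MeasureTheory

noncomputable section

/-- The standard symplectic matrix `Σ` on `ℝ^D`: block-diagonal with `D/2` blocks
`((0, -1), (1, 0))`. -/
def stdSigma (D : ℕ) : Matrix (Fin D) (Fin D) ℝ := fun i j =>
  if i.val % 2 = 1 ∧ i.val = j.val + 1 then 1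
  else if j.val % 2 = 1 ∧ j.val = i.val + 1 then -1 else 0

/-- `Θ = θ Σ`. -/
def Theta (θ : ℝ) (D : ℕ) : Matrix (Fin D) (Fin D) ℝ := θ • stdSigma D

/-- `y ∧ z = 2 yᵀ Θ⁻¹ z`. -/
def wedge (θ : ℝ) {D : ℕ} (y z : EuclideanSpace ℝ (Fin D)) : ℝ :=
  2 * ∑ i, ∑ j, y i * (Theta θ D)⁻¹ i j * z j

/-- The Moyal product `(f ⋆ g)(x) = (πθ)^{-D} ∬ f(x+y) g(x+z) e^{-i y∧z} dy dz`. -/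
def moyal (θ : ℝ) {D : ℕ} (f g : EuclideanSpace ℝ (Fin D) → ℂ) :
    EuclideanSpace ℝ (Fin D) → ℂ := fun x =>
  ((Real.pi * θ) ^ D)⁻¹ •
    ∫ p : EuclideanSpace ℝ (Fin D) × EuclideanSpace ℝ (Fin D),
      f (x + p.1) * g (x + p.2) * Complex.exp (-(Complex.I) * (wedge θ p.1 p.2 : ℂ))

open scoped RealInnerProductSpace FourierTransform SchwartzMap

section Twisted

variable {V : Type*} [NormedAddCommGroup V] [InnerProductSpace ℝ V] [FiniteDimensional ℝ V]
  [MeasurableSpace V] [BorelSpace V]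

theorem integral_comp_add_mul_fourierChar (f : V → ℂ) (x ξ : V) :
    ∫ y, f (x + y) * 𝐞 ⟪y, ξ⟫ = 𝐞 (-⟪x, ξ⟫) * 𝓕⁻ f ξ := by
  rw [Real.fourierInv_eq, ← integral_add_left_eq_self (fun v => 𝐞 ⟪v, ξ⟫ • f v) x,
    ← integral_const_mul]
  congr 1 with y
  have h : (𝐞 (-⟪x, ξ⟫) : ℂ) * 𝐞 ⟪x, ξ⟫ = 1 := by
    simp [← Circle.coe_mul, ← AddChar.map_add_eq_mul]
  simp only [inner_add_left, AddChar.map_add_eq_mul, Circle.smul_def, smul_eq_mul, Circle.coe_mul]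
  linear_combination (-(f (x + y) * 𝐞 ⟪y, ξ⟫)) * h

theorem integral_comp_add_mul_fourierChar_neg (f : V → ℂ) (x ξ : V) :
    ∫ y, f (x + y) * 𝐞 (-⟪y, ξ⟫) = 𝐞 ⟪x, ξ⟫ * 𝓕 f ξ := by
  simpa [inner_neg_right, Real.fourierInv_eq_fourier_neg] using
    integral_comp_add_mul_fourierChar f x (-ξ)

theorem integral_comp_smul_linearIsometryEquiv {E : Type*} [NormedAddCommGroup E]
    [NormedSpace ℝ E] (J : V ≃ₗᵢ[ℝ] V) (r : ℝ) (φ : V → E) :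
    ∫ z, φ (r • J z) = |r ^ Module.finrank ℝ V|⁻¹ • ∫ ξ, φ ξ := by
  simp_rw [← map_smul]
  rw [Measure.integral_comp_smul volume (fun z => φ (J z)), abs_inv,
    J.measurePreserving.integral_comp J.toHomeomorph.measurableEmbedding]

theorem MeasureTheory.Integrable.comp_smul_linearIsometryEquiv {E : Type*}
    [NormedAddCommGroup E] (J : V ≃ₗᵢ[ℝ] V) {r : ℝ} (hr : r ≠ 0) {φ : V → E}
    (hφ : Integrable φ) : Integrable (fun z => φ (r • J z)) := by
  simp_rw [← map_smul]
  exact ((J.measurePreserving.integrable_comp_emb J.toHomeomorph.measurableEmbedding).2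
    hφ).comp_smul hr

variable (J : V ≃ₗᵢ[ℝ] V)

def twistedProduct (r : ℝ) (f g : V → ℂ) (x : V) : ℂ :=
  ∫ p : V × V, f (x + p.1) * g (x + p.2) * 𝐞 ⟪p.1, r • J p.2⟫

def twistedKernel (r : ℝ) (g h : V → ℂ) (p : V × V) : ℂ :=
  g (p.1 + p.2) * (𝐞 (-⟪p.1, r • J p.2⟫) * h (r • J p.2))

theorem twistedProduct_eq_integral_twistedKernel (r : ℝ) {f g : V → ℂ} (hf : Integrable f)
    (hg : Integrable g) (x : V) :
    twistedProduct J r f g x = ∫ z, twistedKernel J r g (𝓕⁻ f) (x, z) := by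
  have hphase : Continuous fun p : V × V => (𝐞 ⟪p.1, r • J p.2⟫ : ℂ) := by fun_prop
  have hint : Integrable (fun p : V × V => f (x + p.1) * g (x + p.2) * 𝐞 ⟪p.1, r • J p.2⟫)
      (volume.prod volume) :=
    ((hf.comp_add_left x).mul_prod (hg.comp_add_left x)).mul_bdd hphase.aestronglyMeasurable
      (.of_forall fun p => (Circle.norm_coe _).le)
  rw [twistedProduct, Measure.volume_eq_prod, integral_prod_symm _ hint]
  congr 1 with z
  simp_rw [twistedKernel, mul_right_comm _ (g (x + z)), integral_mul_const,
    integral_comp_add_mul_fourierChar]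
  ring

theorem integrable_twistedKernel {r : ℝ} (hr : r ≠ 0) {g h : V → ℂ} (hg : Integrable g)
    (hh : Integrable h) : Integrable (twistedKernel J r g h) (volume.prod volume) := by
  have hphase : Continuous fun p : V × V => (𝐞 (-⟪p.1, r • J p.2⟫) : ℂ) := by fun_prop
  have hshear : Integrable (fun p : V × V => g (p.1 + p.2) * h (r • J p.2))
      (volume.prod volume) :=
    (measurePreserving_add_prod volume volume).integrable_comp_of_integrable
      (hg.mul_prod (hh.comp_smul_linearIsometryEquiv J hr))
  refine (hshear.mul_bdd hphase.aestronglyMeasurable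
      (.of_forall fun p => (Circle.norm_coe _).le)).congr (.of_forall fun p => ?_)
  simp only [twistedKernel]
  ring

theorem integral_twistedKernel_fst (hJ : ∀ v, ⟪v, J v⟫ = 0) (r : ℝ) (g h : V → ℂ) (z : V) :
    ∫ x, twistedKernel J r g h (x, z) = 𝓕 g (r • J z) * h (r • J z) := by
  simp_rw [twistedKernel, ← mul_assoc, integral_mul_const, add_comm _ z,
    integral_comp_add_mul_fourierChar_neg, inner_smul_right, hJ, mul_zero,
    AddChar.map_zero_eq_one, Circle.coe_one, one_mul]

theorem integrable_twistedProduct {r : ℝ} (hr : r ≠ 0) (f g : 𝓢(V, ℂ)) :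
    Integrable (twistedProduct J r f g) := by
  refine (integrable_twistedKernel J hr g.integrable (𝓕⁻ f).integrable).integral_prod_left.congr
    (.of_forall fun x => ?_)
  rw [twistedProduct_eq_integral_twistedKernel J r f.integrable g.integrable,
    SchwartzMap.fourierInv_coe]

theorem integral_twistedProduct (hJ : ∀ v, ⟪v, J v⟫ = 0) {r : ℝ} (hr : r ≠ 0)
    (f g : 𝓢(V, ℂ)) :
    ∫ x, twistedProduct J r f g x = |r ^ Module.finrank ℝ V|⁻¹ • ∫ x, f x * g x := by
  have hparseval : ∫ ξ, 𝓕 g ξ * 𝓕⁻ f ξ = ∫ x, f x * g x := by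
    rw [SchwartzMap.integral_fourier_mul_eq, FourierTransform.fourier_fourierInv_eq]
    simp_rw [mul_comm]
  calc ∫ x, twistedProduct J r f g x
      = ∫ x, ∫ z, twistedKernel J r g (𝓕⁻ f : 𝓢(V, ℂ)) (x, z) := by
        simp_rw [twistedProduct_eq_integral_twistedKernel J r f.integrable g.integrable,
          SchwartzMap.fourierInv_coe]
    _ = ∫ z, ∫ x, twistedKernel J r g (𝓕⁻ f : 𝓢(V, ℂ)) (x, z) :=
        integral_integral_swap (integrable_twistedKernel J hr g.integrable (𝓕⁻ f).integrable)
    _ = ∫ z, 𝓕 g (r • J z) * 𝓕⁻ f (r • J z) := by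
        simp_rw [integral_twistedKernel_fst J hJ, SchwartzMap.fourier_coe]
    _ = |r ^ Module.finrank ℝ V|⁻¹ • ∫ x, f x * g x := by
        rw [integral_comp_smul_linearIsometryEquiv J r (fun ξ => 𝓕 g ξ * 𝓕⁻ f ξ), hparseval]

end Twisted

theorem ContinuousLinearMap.inner_apply_self_eq_zero_of_mem_skewAdjoint {H : Type*}
    [NormedAddCommGroup H] [InnerProductSpace ℝ H] [CompleteSpace H] {T : H →L[ℝ] H}
    (hT : T ∈ skewAdjoint (H →L[ℝ] H)) (v : H) : ⟪v, T v⟫ = 0 := by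
  have h := ContinuousLinearMap.adjoint_inner_left T v v
  rw [← ContinuousLinearMap.star_eq_adjoint, skewAdjoint.mem_iff.mp hT, neg_apply,
    inner_neg_left, real_inner_comm] at h
  linarith

open scoped Matrix

lemma stdSigma_transpose (D : ℕ) : (stdSigma D)ᵀ = -stdSigma D := by
  ext i j
  simp only [Matrix.transpose_apply, Matrix.neg_apply, stdSigma]
  split_ifs <;> first | omega | norm_num

lemma stdSigma_mul_self {D : ℕ} (hD : Even D) : stdSigma D * stdSigma D = -1 := by
  obtain ⟨m, rfl⟩ := hD
  ext i k
  have hi := i.isLt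
  -- the partner of `i` in its `2 × 2` block: the only nonzero entry of row `i` is in column `j`
  let j : Fin (m + m) := ⟨if i.val % 2 = 1 then i.val - 1 else i.val + 1, by split_ifs <;> omega⟩
  rw [Matrix.mul_apply, Finset.sum_eq_single j]
  · simp only [stdSigma, j, Matrix.neg_apply, Matrix.one_apply, Fin.ext_iff]
    split_ifs <;> first | omega | norm_num
  · intro b _ hb
    rw [Ne, Fin.ext_iff] at hb
    simp only [stdSigma, j] at hb ⊢
    split_ifs at hb ⊢ <;> first | omega | norm_num
  · simp

lemma stdSigma_mem_skewAdjoint (D : ℕ) : stdSigma D ∈ skewAdjoint (Matrix (Fin D) (Fin D) ℝ) := by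
  rw [skewAdjoint.mem_iff, Matrix.star_eq_conjTranspose,
    Matrix.conjTranspose_eq_transpose_of_trivial, stdSigma_transpose]

lemma stdSigma_mem_unitary {D : ℕ} (hD : Even D) :
    stdSigma D ∈ unitary (Matrix (Fin D) (Fin D) ℝ) := by
  rw [Unitary.mem_iff, skewAdjoint.mem_iff.mp (stdSigma_mem_skewAdjoint D), neg_mul, mul_neg,
    stdSigma_mul_self hD, neg_neg, and_self]

abbrev stdSigmaCLM (D : ℕ) : EuclideanSpace ℝ (Fin D) →L[ℝ] EuclideanSpace ℝ (Fin D) :=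
  Matrix.toEuclideanCLM (n := Fin D) (𝕜 := ℝ) (stdSigma D)

def stdSigmaIso {D : ℕ} (hD : Even D) : EuclideanSpace ℝ (Fin D) ≃ₗᵢ[ℝ] EuclideanSpace ℝ (Fin D) :=
  Unitary.linearIsometryEquiv ⟨stdSigmaCLM D, Unitary.map_mem _ (stdSigma_mem_unitary hD)⟩

lemma stdSigmaIso_apply {D : ℕ} (hD : Even D) (v : EuclideanSpace ℝ (Fin D)) :
    stdSigmaIso hD v = stdSigmaCLM D v :=
  rfl

lemma inner_stdSigmaIso_self {D : ℕ} (hD : Even D) (v : EuclideanSpace ℝ (Fin D)) :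
    ⟪v, stdSigmaIso hD v⟫ = 0 := by
  refine ContinuousLinearMap.inner_apply_self_eq_zero_of_mem_skewAdjoint ?_ v
  rw [skewAdjoint.mem_iff, ← map_star, skewAdjoint.mem_iff.mp (stdSigma_mem_skewAdjoint D),
    map_neg]

lemma inv_Theta {θ : ℝ} (hθ : θ ≠ 0) {D : ℕ} (hD : Even D) :
    (Theta θ D)⁻¹ = -θ⁻¹ • stdSigma D := by
  refine Matrix.inv_eq_right_inv ?_
  rw [Theta, Matrix.smul_mul, Matrix.mul_smul, smul_smul, stdSigma_mul_self hD, smul_neg,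
    mul_neg, mul_inv_cancel₀ hθ, neg_smul, one_smul, neg_neg]

lemma wedge_eq_inner (θ : ℝ) {D : ℕ} (y z : EuclideanSpace ℝ (Fin D)) :
    wedge θ y z = 2 * ⟪y, Matrix.toEuclideanCLM (n := Fin D) (𝕜 := ℝ) (Theta θ D)⁻¹ z⟫ := by
  simp [wedge, Matrix.inner_toEuclideanCLM, dotProduct, Matrix.mulVec, Finset.mul_sum, mul_assoc]

lemma wedge_eq_inner_stdSigmaIso {θ : ℝ} (hθ : θ ≠ 0) {D : ℕ} (hD : Even D)
    (y z : EuclideanSpace ℝ (Fin D)) :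
    wedge θ y z = -(2 * θ⁻¹) * ⟪y, stdSigmaIso hD z⟫ := by
  rw [wedge_eq_inner, inv_Theta hθ hD, map_smul, smul_apply, real_inner_smul_right,
    stdSigmaIso_apply]
  ring

lemma cexp_neg_I_mul_wedge {θ : ℝ} (hθ : θ ≠ 0) {D : ℕ} (hD : Even D)
    (y z : EuclideanSpace ℝ (Fin D)) :
    Complex.exp (-Complex.I * wedge θ y z) = 𝐞 ⟪y, (Real.pi * θ)⁻¹ • stdSigmaIso hD z⟫ := by
  rw [wedge_eq_inner_stdSigmaIso hθ hD, Real.fourierChar_apply, real_inner_smul_right]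
  congr 1
  push_cast
  field_simp

lemma moyal_eq_smul_twistedProduct {θ : ℝ} (hθ : θ ≠ 0) {D : ℕ} (hD : Even D)
    (f g : EuclideanSpace ℝ (Fin D) → ℂ) :
    moyal θ f g = ((Real.pi * θ) ^ D)⁻¹ • twistedProduct (stdSigmaIso hD) (Real.pi * θ)⁻¹ f g := by
  ext x
  simp only [moyal, twistedProduct, Pi.smul_apply, cexp_neg_I_mul_wedge hθ hD]

theorem moyal_integral_trace_general (D : ℕ) (hDeven : Even D) (θ : ℝ) (hθ : 0 < θ)
    (f g : SchwartzMap (EuclideanSpace ℝ (Fin D)) ℂ) :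
    Integrable (moyal θ (⇑f) (⇑g)) ∧
    ∫ x : EuclideanSpace ℝ (Fin D), moyal θ (⇑f) (⇑g) x
      = ∫ x : EuclideanSpace ℝ (Fin D), f x * g x := by
  have hπθ : 0 < Real.pi * θ := by positivity
  have hr : (Real.pi * θ)⁻¹ ≠ 0 := inv_ne_zero hπθ.ne'
  rw [moyal_eq_smul_twistedProduct hθ.ne' hDeven]
  refine ⟨(integrable_twistedProduct _ hr f g).smul _, ?_⟩
  simp only [Pi.smul_apply]
  rw [integral_smul, integral_twistedProduct _ (inner_stdSigmaIso_self hDeven) hr,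
    finrank_euclideanSpace_fin, smul_smul, inv_pow, abs_inv, inv_inv, abs_of_pos (by positivity),
    inv_mul_cancel₀ (by positivity), one_smul]

/-- the integral is a trace for the Moyal product:
`f ⋆ g` is integrable and `∫ (f ⋆ g) = ∫ f g`. -/
theorem moyal_integral_trace (D : ℕ) (hD : 0 < D) (hDeven : Even D) (θ : ℝ) (hθ : 0 < θ)
    (f g : SchwartzMap (EuclideanSpace ℝ (Fin D)) ℂ) :
    Integrable (moyal θ (⇑f) (⇑g)) ∧
    ∫ x : EuclideanSpace ℝ (Fin D), moyal θ (⇑f) (⇑g) x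
      = ∫ x : EuclideanSpace ℝ (Fin D), f x * g x :=
  moyal_integral_trace_general D hDeven θ hθ f g

end
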